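/- Let y be an odd positive integer and let d ≥ 1. Then for all (x,z) ∈ ℕ×ℕ, writing x' = ⌊x/2^d⌋, z' = ⌊z/2^d⌋, x'' = x mod 2^d, z'' = z mod 2^d, one has culam[2^d·y+1](x,z) = min(2, culam[y−1](x',z')·O1[d](x'',z'') + culam[y](x',z')·O2[d](x'',z'')). -/

import Mathlib

/-- Fuel-indexed Ulam predicate: a binary word (as a `List Bool`) of length 1 is Ulam,
and a longer word is Ulam iff it is expressible *uniquely* as a concatenation of two
distinct (nonempty) Ulam words. The fuel strictly exceeds the lengths needed. -/
def ulamAux : ℕ → List Bool → Prop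
  | 0, _ => False
  | n + 1, w =>
    if w.length = 1 then True
    else ∃! p : List Bool × List Bool,
      p.1 ≠ [] ∧ p.2 ≠ [] ∧ p.1 ≠ p.2 ∧ w = p.1 ++ p.2 ∧
        ulamAux n p.1 ∧ ulamAux n p.2

/-- A binary word is an Ulam word. -/
def IsUlam (w : List Bool) : Prop := ulamAux w.length w

/-- The word `0^x 1 0^y`. -/
def wordTwo (x y : ℕ) : List Bool :=
  List.replicate x false ++ [true] ++ List.replicate y false

/-- The word `0^x 1 0^y 1 0^z`. -/
def wordThree (x y z : ℕ) : List Bool :=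
  List.replicate x false ++ [true] ++ List.replicate y false ++ [true] ++
    List.replicate z false

/-- `UlamSet y` is the set of pairs `(x,z)` such that `0^x 1 0^y 1 0^z` is Ulam. -/
def UlamSet (y : ℕ) : Set (ℕ × ℕ) := {p | IsUlam (wordThree p.1 y p.2)}

/-- `culam y x z = min(2, N)` where `N` counts `0 ≤ a ≤ y` with both
`w(x,a)` and `w(y-a,z)` Ulam. -/
noncomputable def culam (y x z : ℕ) : ℕ :=
  min 2 {a : ℕ | a ≤ y ∧ IsUlam (wordTwo x a) ∧ IsUlam (wordTwo (y - a) z)}.ncard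

/-- A positive integer is Zumkeller if its binary representation has at most one `0`. -/
def IsZumkeller (y : ℕ) : Prop := 0 < y ∧ (Nat.bits y).count false ≤ 1

/-- The largest `e ≤ d - 1` with `x mod 2^(e+1) < 2^e` and `z mod 2^(e+1) < 2^e`
(and `0` if none exists). -/
def eIdx (d x z : ℕ) : ℕ :=
  Nat.findGreatest (fun e => x % 2 ^ (e + 1) < 2 ^ e ∧ z % 2 ^ (e + 1) < 2 ^ e) (d - 1)

/-- The universal pattern `E1[d]` on `B_d`. -/
def E1 (d x z : ℕ) : ℕ :=
  if 2 ^ d - 1 ≤ x + z then 0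
  else if x % 2 ^ eIdx d x z + z % 2 ^ eIdx d x z < 2 ^ eIdx d x z - 1 then 2 else 1

/-- The universal pattern `E2[d]` on `B_d` (constant `1`). -/
def E2 (_d _x _z : ℕ) : ℕ := 1

/-- The universal pattern `O1[d]` on `B_d`. -/
def O1 (d x z : ℕ) : ℕ :=
  if 2 ^ d - 2 ≤ x + z then 0
  else if (x + z) % 2 = 0 then (if x % 2 = 1 then 0 else 2)
  else if x % 2 ^ eIdx d x z + z % 2 ^ eIdx d x z < 2 ^ eIdx d x z - 1 then 2 else 1

/-- The universal pattern `O2[d]` on `B_d` (independent of `d`). -/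
def O2 (_d x z : ℕ) : ℕ :=
  if (x + z) % 2 = 0 then (if x % 2 = 1 then 0 else 2) else 1

/-!
The word `0^x 1 0^a` can only split as `0 · 0^(x-1) 1 0^a` or `0^x 1 0^(a-1) · 0`, because `0^k` is
Ulam only for `k = 1`. Hence its Ulam property obeys Pascal's rule mod 2: it is Ulam iff
`C(x+a, x)` is odd, iff (Lucas) `x` and `a` have disjoint binary digits. So `culam[n](x,z)` is the
number, capped at 2, of `a ≤ n` with `x &&& a = 0` and `(n - a) &&& z = 0`.

For `n = 2^d y + 1` write `a = 2^d q + r` and `n - a = 2^d q' + r'`. Disjointness splits into the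
high and the low `d` digits, and either `r + r' = 1`, `q + q' = y`, or (a borrow) `r + r' = 2^d + 1`,
`q + q' = y - 1`. The count therefore factors as `c₂ · N(y) + c₁ · N(y - 1)`, where `N` is the same
count for the high digits `x / 2^d`, `z / 2^d`, and `c₂ = O2[d]`, `c₁` count the admissible low
digits. Splitting off the last digit, `c₁` is a parity factor times the number of
splittings `2^e = a + b` (`a, b ≥ 1`) with the same disjointness; capped at 2 that number is the
pattern `E1[e]`, by induction on the top digit, and this gives `min 2 c₁ = O1[d]`.
-/

open Finset

lemma existsUnique_eq_and_or_eq_and_iff {α : Type*} {p q : α} {P Q : Prop} (hpq : p ≠ q) :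
    (∃! r, r = p ∧ P ∨ r = q ∧ Q) ↔ Xor P Q := by
  constructor
  · rintro ⟨r, ⟨rfl, hP⟩ | ⟨rfl, hQ⟩, huniq⟩
    · exact .inl ⟨hP, fun hQ ↦ hpq (huniq q (.inr ⟨rfl, hQ⟩)).symm⟩
    · exact .inr ⟨hQ, fun hP ↦ hpq (huniq p (.inl ⟨rfl, hP⟩))⟩
  · rintro (⟨hP, hQ⟩ | ⟨hQ, hP⟩)
    · exact ⟨p, .inl ⟨rfl, hP⟩, by rintro r (⟨rfl, -⟩ | ⟨-, h⟩); exacts [rfl, absurd h hQ]⟩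
    · exact ⟨q, .inr ⟨rfl, hQ⟩, by rintro r (⟨-, h⟩ | ⟨rfl, -⟩); exacts [absurd h hP, rfl]⟩

lemma Nat.findGreatest_congr {P Q : ℕ → Prop} [DecidablePred P] [DecidablePred Q] {n : ℕ}
    (h : ∀ k ≤ n, P k ↔ Q k) : Nat.findGreatest P n = Nat.findGreatest Q n := by
  induction n with
  | zero => rfl
  | succ n ih =>
    simp only [Nat.findGreatest_succ, h (n + 1) le_rfl, ih fun k hk ↦ h k (by omega)]

lemma Finset.sum_range_mul_eq_sum_sum {M : Type*} [AddCommMonoid M] (f : ℕ → M) (D m : ℕ) :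
    ∑ a ∈ range (D * m), f a = ∑ q ∈ range m, ∑ r ∈ range D, f (D * q + r) := by
  induction m with
  | zero => simp
  | succ m ih => rw [Nat.mul_succ, sum_range_add, ih, sum_range_succ]

lemma Finset.sum_range_ite_lt {M : Type*} [AddCommMonoid M] (f : ℕ → M) {m n : ℕ} (h : m ≤ n) :
    ∑ r ∈ range n, (if r < m then f r else 0) = ∑ r ∈ range m, f r := by
  rw [← sum_range_add_sum_Ico _ h, sum_congr rfl fun r hr ↦ if_pos (mem_range.1 hr),
    sum_eq_zero fun r hr ↦ if_neg (by simp at hr; omega), add_zero]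

lemma Nat.land_eq_zero_iff_div_mod (D a b : ℕ) :
    a &&& b = 0 ↔ a / 2 ^ D &&& b / 2 ^ D = 0 ∧ a % 2 ^ D &&& b % 2 ^ D = 0 := by
  rw [← Nat.and_div_two_pow, ← Nat.and_mod_two_pow]
  refine ⟨fun h ↦ by simp [h], fun ⟨h1, h2⟩ ↦ ?_⟩
  rw [← Nat.div_add_mod (a &&& b) (2 ^ D), h1, h2, mul_zero]

lemma Nat.land_eq_zero_iff_div_two (a b : ℕ) :
    a &&& b = 0 ↔ a / 2 &&& b / 2 = 0 ∧ ¬(a % 2 = 1 ∧ b % 2 = 1) := by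
  rw [← pow_one 2, Nat.land_eq_zero_iff_div_mod 1, pow_one]
  rcases Nat.mod_two_eq_zero_or_one a with ha | ha <;>
    rcases Nat.mod_two_eq_zero_or_one b with hb | hb <;> simp [ha, hb]

lemma Nat.odd_choose_add_iff (x a : ℕ) :
    Odd ((x + a).choose x) ↔ Odd ((x / 2 + a / 2).choose (x / 2)) ∧ ¬(x % 2 = 1 ∧ a % 2 = 1) := by
  have lucas := Choose.choose_modEq_choose_mod_mul_choose_div_nat (n := x + a) (k := x) (p := 2)
  rw [Nat.odd_iff, Nat.odd_iff, lucas]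
  rcases Nat.mod_two_eq_zero_or_one x with hx | hx <;>
    rcases Nat.mod_two_eq_zero_or_one a with ha | ha
  all_goals
    first
      | rw [show (x + a) / 2 = x / 2 + a / 2 by omega]
      | rw [show (x + a) / 2 = x / 2 + a / 2 + 1 by omega]
    simp [hx, ha, Nat.add_mod]

lemma Nat.odd_choose_add_iff_land_eq_zero (x a : ℕ) : Odd ((x + a).choose x) ↔ x &&& a = 0 := by
  induction x using Nat.strong_induction_on generalizing a with
  | _ x ih =>
    rcases Nat.eq_zero_or_pos x with rfl | hx
    · simp
    rw [Nat.odd_choose_add_iff, ih _ (by omega), Nat.land_eq_zero_iff_div_two x a]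

lemma min_two_add_mul (a b c d : ℕ) :
    min 2 (a * b + c * d) = min 2 (min 2 a * min 2 b + min 2 c * min 2 d) := by
  have min_two_mul : ∀ m n : ℕ, min 2 (m * n) = min 2 (min 2 m * min 2 n) := by
    intro m n
    rcases m with _ | _ | m <;> rcases n with _ | _ | n <;> simp
    nlinarith
  rw [show min 2 (a * b + c * d) = min 2 (min 2 (a * b) + min 2 (c * d)) by omega,
    min_two_mul a, min_two_mul c]
  omega

lemma length_lt_of_eq_append {α : Type*} {w u v : List α} (h : w = u ++ v) (hu : u ≠ [])
    (hv : v ≠ []) : u.length < w.length ∧ v.length < w.length := by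
  have := List.length_pos_iff.mpr hu
  have := List.length_pos_iff.mpr hv
  rw [h, List.length_append]
  omega

lemma ulamAux_congr_fuel {m n : ℕ} {w : List Bool} (hw : w ≠ []) (hm : w.length ≤ m)
    (hn : w.length ≤ n) : ulamAux m w ↔ ulamAux n w := by
  replace hw := List.length_pos_iff.mpr hw
  induction m generalizing n w with
  | zero => omega
  | succ m ih =>
    obtain ⟨n, rfl⟩ : ∃ k, n = k + 1 := ⟨n - 1, by omega⟩
    simp only [ulamAux]
    by_cases h1 : w.length = 1
    · simp [h1]
    simp only [h1, if_false]
    refine existsUnique_congr fun p ↦ and_congr_right fun hp1 ↦ and_congr_right fun hp2 ↦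
      and_congr_right fun _ ↦ and_congr_right fun hp ↦ ?_
    obtain ⟨h1, h2⟩ := length_lt_of_eq_append hp hp1 hp2
    have := List.length_pos_iff.mpr hp1
    have := List.length_pos_iff.mpr hp2
    exact and_congr (ih (by omega) (by omega) (by omega)) (ih (by omega) (by omega) (by omega))

lemma isUlam_iff_existsUnique {w : List Bool} (hw : 2 ≤ w.length) :
    IsUlam w ↔ ∃! p : List Bool × List Bool,
      p.1 ≠ [] ∧ p.2 ≠ [] ∧ p.1 ≠ p.2 ∧ w = p.1 ++ p.2 ∧ IsUlam p.1 ∧ IsUlam p.2 := by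
  obtain ⟨m, hm⟩ : ∃ m, w.length = m + 1 := ⟨w.length - 1, by omega⟩
  rw [IsUlam, hm, ulamAux, if_neg (by omega)]
  refine existsUnique_congr fun p ↦ and_congr_right fun hp1 ↦ and_congr_right fun hp2 ↦
    and_congr_right fun _ ↦ and_congr_right fun hp ↦ ?_
  obtain ⟨h1, h2⟩ := length_lt_of_eq_append hp hp1 hp2
  exact and_congr (ulamAux_congr_fuel hp1 (by omega) le_rfl)
    (ulamAux_congr_fuel hp2 (by omega) le_rfl)

lemma isUlam_singleton (b : Bool) : IsUlam [b] := by
  simp [IsUlam, ulamAux]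

lemma isUlam_replicate_false_iff {k : ℕ} : IsUlam (List.replicate k false) ↔ k = 1 := by
  induction k using Nat.strong_induction_on with
  | _ k ih =>
    refine ⟨fun hU ↦ ?_, fun hk ↦ hk ▸ isUlam_singleton false⟩
    by_contra hk1
    obtain rfl | hk : k = 0 ∨ 2 ≤ k := by omega
    · simp [IsUlam, ulamAux] at hU
    rw [isUlam_iff_existsUnique (by simpa)] at hU
    obtain ⟨⟨u, v⟩, ⟨hu, hv, huv, hk', hUu, hUv⟩, -⟩ := hU
    dsimp only at *
    obtain ⟨hlen, hu', hv'⟩ := List.append_eq_replicate_iff.mp hk'.symm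
    have := List.length_pos_iff.mpr hu
    have := List.length_pos_iff.mpr hv
    rw [hu', ih _ (by omega)] at hUu
    rw [hv', ih _ (by omega)] at hUv
    exact huv (by rw [hu', hv', hUu, hUv])

lemma wordTwo_eq_replicate_append (x a : ℕ) :
    wordTwo x a = List.replicate x false ++ true :: List.replicate a false := by
  simp [wordTwo]

lemma true_mem_wordTwo (x a : ℕ) : true ∈ wordTwo x a := by
  simp [wordTwo]

lemma wordTwo_succ_left (x a : ℕ) : wordTwo (x + 1) a = [false] ++ wordTwo x a := by
  simp [wordTwo, List.replicate_succ]

lemma wordTwo_succ_right (x a : ℕ) : wordTwo x (a + 1) = wordTwo x a ++ [false] := by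
  simp [wordTwo, List.replicate_succ']

lemma eq_of_wordTwo_eq_append {x a : ℕ} {u v : List Bool} (h : wordTwo x a = u ++ v)
    (hu : u ≠ []) (hv : v ≠ []) (hUu : IsUlam u) (hUv : IsUlam v) :
    (0 < x ∧ u = [false] ∧ v = wordTwo (x - 1) a) ∨
      (0 < a ∧ u = wordTwo x (a - 1) ∧ v = [false]) := by
  rw [wordTwo_eq_replicate_append, List.append_eq_append_iff] at h
  rcases h with ⟨_ | ⟨b, c⟩, rfl, hc⟩ | ⟨c, hx, rfl⟩
  · rw [List.append_nil, isUlam_replicate_false_iff] at hUu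
    subst hUu
    simp_all [wordTwo]
  · rw [List.cons_append, List.cons.injEq] at hc
    obtain ⟨rfl, hc⟩ := hc
    obtain ⟨hlen, hc, hv'⟩ := List.append_eq_replicate_iff.mp hc.symm
    rw [hv', isUlam_replicate_false_iff] at hUv
    right
    refine ⟨by omega, ?_, by rw [hv', hUv]; rfl⟩
    rw [hc, wordTwo_eq_replicate_append, show a - 1 = c.length by omega]
  · obtain ⟨hlen, hu', hc⟩ := List.append_eq_replicate_iff.mp hx.symm
    rw [hu', isUlam_replicate_false_iff] at hUu
    have := List.length_pos_iff.mpr hu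
    left
    refine ⟨by omega, by rw [hu', hUu]; rfl, ?_⟩
    rw [hc, wordTwo_eq_replicate_append, show x - 1 = c.length by omega]

lemma isUlam_wordTwo_iff_xor {x a : ℕ} (h : 0 < x + a) :
    IsUlam (wordTwo x a) ↔
      Xor (0 < x ∧ IsUlam (wordTwo (x - 1) a)) (0 < a ∧ IsUlam (wordTwo x (a - 1))) := by
  have hne : ∀ x' a', [false] ≠ wordTwo x' a' := fun x' a' h ↦ by
    simpa [← h] using true_mem_wordTwo x' a'
  rw [isUlam_iff_existsUnique (by simp [wordTwo]; omega)]
  rw [← existsUnique_eq_and_or_eq_and_iff (p := ([false], wordTwo (x - 1) a))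
    (q := (wordTwo x (a - 1), [false])) (by simp [hne])]
  refine existsUnique_congr fun ⟨u, v⟩ ↦ ⟨fun ⟨hu, hv, _, huv, hUu, hUv⟩ ↦ ?_, ?_⟩
  · rcases eq_of_wordTwo_eq_append huv hu hv hUu hUv with ⟨hx, rfl, rfl⟩ | ⟨ha, rfl, rfl⟩
    · exact .inl ⟨rfl, hx, hUv⟩
    · exact .inr ⟨rfl, ha, hUu⟩
  · rintro (⟨hp, hx, hU⟩ | ⟨hp, ha, hU⟩) <;> obtain ⟨rfl, rfl⟩ := Prod.mk.inj hp
    · obtain ⟨x, rfl⟩ : ∃ x', x = x' + 1 := ⟨x - 1, by omega⟩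
      exact ⟨by simp, List.ne_nil_of_mem (true_mem_wordTwo _ _), hne _ _, wordTwo_succ_left x a,
        isUlam_singleton false, hU⟩
    · obtain ⟨a, rfl⟩ : ∃ a', a = a' + 1 := ⟨a - 1, by omega⟩
      exact ⟨List.ne_nil_of_mem (true_mem_wordTwo _ _), by simp, (hne _ _).symm,
        wordTwo_succ_right x a, hU, isUlam_singleton false⟩

lemma isUlam_wordTwo_iff_odd_choose (x a : ℕ) :
    IsUlam (wordTwo x a) ↔ Odd ((x + a).choose x) := by
  induction x generalizing a with
  | zero =>
    induction a with
    | zero => exact iff_of_true (isUlam_singleton true) (by simp)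
    | succ a ih => rw [isUlam_wordTwo_iff_xor (by omega)]; simp [ih]
  | succ x ihx =>
    induction a with
    | zero => rw [isUlam_wordTwo_iff_xor (by omega)]; simp [ihx]
    | succ a iha =>
      rw [isUlam_wordTwo_iff_xor (by omega), show x + 1 + (a + 1) = (x + 1 + a) + 1 by ring,
        Nat.choose_succ_succ', Nat.odd_add, ← Nat.not_odd_iff_even, ← xor_iff_iff_not]
      simp [ihx, iha, ← add_assoc, add_right_comm x 1 a]

theorem isUlam_wordTwo_iff (x a : ℕ) : IsUlam (wordTwo x a) ↔ x &&& a = 0 :=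
  (isUlam_wordTwo_iff_odd_choose x a).trans (Nat.odd_choose_add_iff_land_eq_zero x a)

/-- By `isUlam_wordTwo_iff`, this is `1` iff `w(x,a)` and `w(b,z)` are both Ulam. -/
def splitInd (x a b z : ℕ) : ℕ := if x &&& a = 0 ∧ b &&& z = 0 then 1 else 0

def ulamCount (n x z : ℕ) : ℕ := ∑ a ∈ range (n + 1), splitInd x a (n - a) z

def borrowCount (d x z : ℕ) : ℕ :=
  ∑ r ∈ range (2 ^ d), if 2 ≤ r then splitInd x r (2 ^ d + 1 - r) z else 0

def powSplitCount (e x z : ℕ) : ℕ :=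
  ∑ a ∈ range (2 ^ e), if 0 < a then splitInd x a (2 ^ e - a) z else 0

lemma splitInd_two_pow_mul_add {D r t : ℕ} (hr : r < 2 ^ D) (ht : t < 2 ^ D) (x q s z : ℕ) :
    splitInd x (2 ^ D * q + r) (2 ^ D * s + t) z =
      splitInd (x / 2 ^ D) q s (z / 2 ^ D) * splitInd (x % 2 ^ D) r t (z % 2 ^ D) := by
  have hpos : 0 < 2 ^ D := by positivity
  simp only [splitInd, ite_zero_mul_ite_zero, mul_one]
  refine if_congr ?_ rfl rfl
  rw [Nat.land_eq_zero_iff_div_mod D x, Nat.land_eq_zero_iff_div_mod D _ z, Nat.mul_add_div hpos,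
    Nat.mul_add_div hpos, Nat.div_eq_of_lt hr, Nat.div_eq_of_lt ht, Nat.mul_add_mod,
    Nat.mul_add_mod, Nat.mod_eq_of_lt hr, Nat.mod_eq_of_lt ht, add_zero, add_zero]
  tauto

lemma splitInd_two_mul_add {t t' : ℕ} (ht : t < 2) (ht' : t' < 2) (x s s' z : ℕ) :
    splitInd x (2 * s + t) (2 * s' + t') z =
      splitInd (x / 2) s s' (z / 2) * splitInd (x % 2) t t' (z % 2) := by
  simpa using splitInd_two_pow_mul_add (D := 1) (by simpa using ht) (by simpa using ht') x s s' z

lemma ulamCount_one (x z : ℕ) :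
    ulamCount 1 x z = (if x % 2 = 0 then 1 else 0) + (if z % 2 = 0 then 1 else 0) := by
  rw [ulamCount, sum_range_succ, sum_range_one]
  simp only [splitInd, Nat.and_zero, Nat.zero_and, Nat.land_comm 1 z, Nat.and_one_is_mod,
    Nat.sub_self, Nat.sub_zero, true_and, and_true]
  rw [add_comm]

lemma ulamCount_one_eq_sum (x z : ℕ) :
    ulamCount 1 x z = ∑ r ∈ range 2, splitInd x r (1 - r) z := rfl

lemma culam_eq_min_ulamCount (n x z : ℕ) : culam n x z = min 2 (ulamCount n x z) := by
  rw [culam, ulamCount]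
  congr 1
  simp only [splitInd, sum_boole, Nat.cast_id, ← Set.ncard_coe_finset, coe_filter, mem_range,
    Nat.lt_succ_iff, isUlam_wordTwo_iff]

theorem ulamCount_two_pow_mul_add_one {d y : ℕ} (hd : 1 ≤ d) (hy : 0 < y) (x z : ℕ) :
    ulamCount (2 ^ d * y + 1) x z =
      ulamCount 1 (x % 2 ^ d) (z % 2 ^ d) * ulamCount y (x / 2 ^ d) (z / 2 ^ d) +
        borrowCount d (x % 2 ^ d) (z % 2 ^ d) * ulamCount (y - 1) (x / 2 ^ d) (z / 2 ^ d) := by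
  set X := x / 2 ^ d
  set Z := z / 2 ^ d
  have h2 : 2 ≤ 2 ^ d := by simpa using Nat.pow_le_pow_right two_pos hd
  have block : ∀ q < y, ∀ r < 2 ^ d,
      splitInd x (2 ^ d * q + r) (2 ^ d * y + 1 - (2 ^ d * q + r)) z =
        (if r < 2 then splitInd X q (y - q) Z * splitInd (x % 2 ^ d) r (1 - r) (z % 2 ^ d)
          else 0) +
        splitInd X q (y - 1 - q) Z *
          (if 2 ≤ r then splitInd (x % 2 ^ d) r (2 ^ d + 1 - r) (z % 2 ^ d) else 0) := by
    intro q hq r hr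
    have hyq : 2 ^ d * y = 2 ^ d * q + 2 ^ d * (y - 1 - q) + 2 ^ d := by
      rw [← mul_add, ← mul_add_one]; congr 1; omega
    by_cases hr2 : r < 2
    · rw [show 2 ^ d * y + 1 - (2 ^ d * q + r) = 2 ^ d * (y - q) + (1 - r) by
          rw [show y - q = y - 1 - q + 1 by omega, mul_add_one]; omega,
        splitInd_two_pow_mul_add hr (by omega), if_pos hr2, if_neg (by omega), mul_zero, add_zero]
    · rw [show 2 ^ d * y + 1 - (2 ^ d * q + r) = 2 ^ d * (y - 1 - q) + (2 ^ d + 1 - r) by omega,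
        splitInd_two_pow_mul_add hr (by omega), if_neg hr2, if_pos (by omega), zero_add]
  have top : ∀ i < 2, splitInd x (2 ^ d * y + i) (2 ^ d * y + 1 - (2 ^ d * y + i)) z =
      splitInd X y (y - y) Z * splitInd (x % 2 ^ d) i (1 - i) (z % 2 ^ d) := by
    intro i hi
    rw [show 2 ^ d * y + 1 - (2 ^ d * y + i) = 2 ^ d * 0 + (1 - i) by omega, Nat.sub_self,
      splitInd_two_pow_mul_add (by omega) (by omega)]
  rw [ulamCount, show 2 ^ d * y + 1 + 1 = 2 ^ d * y + 2 by ring, sum_range_add,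
    sum_range_mul_eq_sum_sum,
    sum_congr rfl fun q hq ↦ sum_congr rfl fun r hr ↦ block q (mem_range.1 hq) r (mem_range.1 hr),
    sum_congr rfl fun i hi ↦ top i (mem_range.1 hi)]
  simp only [sum_add_distrib, sum_range_ite_lt _ h2, ← mul_sum, ← ulamCount_one_eq_sum]
  have hU : ulamCount y X Z = ∑ q ∈ range y, splitInd X q (y - q) Z + splitInd X y (y - y) Z :=
    sum_range_succ _ y
  have hU' : ulamCount (y - 1) X Z = ∑ q ∈ range y, splitInd X q (y - 1 - q) Z := by
    rw [ulamCount, show y - 1 + 1 = y by omega]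
  rw [← sum_mul, ← sum_mul, ← borrowCount, hU, hU']
  ring

lemma min_two_ulamCount_one (d x z : ℕ) : min 2 (ulamCount 1 x z) = O2 d x z := by
  rw [ulamCount_one, O2]
  rcases Nat.mod_two_eq_zero_or_one x with hx | hx <;>
    rcases Nat.mod_two_eq_zero_or_one z with hz | hz <;> simp [hx, hz, Nat.add_mod]

lemma borrowCount_succ (e x z : ℕ) :
    borrowCount (e + 1) x z = ulamCount 1 x z * powSplitCount e (x / 2) (z / 2) := by
  have term : ∀ s < 2 ^ e, ∀ t < 2,
      (if 2 ≤ 2 * s + t then splitInd x (2 * s + t) (2 * 2 ^ e + 1 - (2 * s + t)) z else 0) =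
        splitInd (x % 2) t (1 - t) (z % 2) *
          if 0 < s then splitInd (x / 2) s (2 ^ e - s) (z / 2) else 0 := by
    intro s hs' t ht
    by_cases hs : 0 < s
    · rw [if_pos (by omega), if_pos hs, show 2 * 2 ^ e + 1 - (2 * s + t) = 2 * (2 ^ e - s) + (1 - t)
        by omega, splitInd_two_mul_add ht (by omega), mul_comm]
    · rw [if_neg (by omega), if_neg hs, mul_zero]
  have hU : ulamCount 1 (x % 2) (z % 2) = ulamCount 1 x z := by simp [ulamCount_one]
  rw [borrowCount, pow_succ', sum_range_mul_eq_sum_sum, powSplitCount, mul_sum]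
  refine sum_congr rfl fun s hs ↦ ?_
  rw [sum_congr rfl fun t ht ↦ term s (mem_range.1 hs) t (mem_range.1 ht), ← sum_mul,
    ← ulamCount_one_eq_sum, hU]

lemma powSplitCount_succ_of_odd {x z : ℕ} (h : x % 2 = 1 ∨ z % 2 = 1) (e : ℕ) :
    powSplitCount (e + 1) x z = powSplitCount e (x / 2) (z / 2) := by
  have h11 : splitInd (x % 2) 1 1 (z % 2) = 0 := by
    rcases h with h | h <;> simp [splitInd, h, Nat.land_comm 1]
  rw [powSplitCount, pow_succ', sum_range_mul_eq_sum_sum, powSplitCount]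
  refine sum_congr rfl fun s hs ↦ ?_
  have hs := mem_range.1 hs
  have even : (if 0 < 2 * s + 0 then splitInd x (2 * s + 0) (2 * 2 ^ e - (2 * s + 0)) z else 0) =
      if 0 < s then splitInd (x / 2) s (2 ^ e - s) (z / 2) else 0 := by
    by_cases hs0 : 0 < s
    · rw [if_pos (by omega), if_pos hs0,
        show 2 * 2 ^ e - (2 * s + 0) = 2 * (2 ^ e - s) + 0 by omega,
        splitInd_two_mul_add two_pos two_pos]
      simp [splitInd]
    · rw [if_neg (by omega), if_neg hs0]
  have odd :
      (if 0 < 2 * s + 1 then splitInd x (2 * s + 1) (2 * 2 ^ e - (2 * s + 1)) z else 0) = 0 := by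
    rw [if_pos (by omega), show 2 * 2 ^ e - (2 * s + 1) = 2 * (2 ^ e - s - 1) + 1 by omega,
      splitInd_two_mul_add one_lt_two one_lt_two, h11, mul_zero]
  rw [sum_range_succ, sum_range_one, even, odd, add_zero]

lemma powSplitCount_succ (e x z : ℕ) :
    powSplitCount (e + 1) x z =
      ulamCount 1 (x / 2 ^ e) (z / 2 ^ e) * powSplitCount e (x % 2 ^ e) (z % 2 ^ e) +
        splitInd (x / 2 ^ e) 1 1 (z / 2 ^ e) := by
  set X := x / 2 ^ e
  set Z := z / 2 ^ e
  set G := fun a ↦ if 0 < a then splitInd (x % 2 ^ e) a (2 ^ e - a) (z % 2 ^ e) else 0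
  have low : ∀ a < 2 ^ e,
      (if 0 < a then splitInd x a (2 ^ e + 2 ^ e - a) z else 0) = splitInd X 0 1 Z * G a := by
    intro a ha
    by_cases ha0 : 0 < a
    · simp only [G, if_pos ha0]
      rw [show 2 ^ e + 2 ^ e - a = 2 ^ e * 1 + (2 ^ e - a) by omega, ← zero_add a,
        ← mul_zero (2 ^ e), splitInd_two_pow_mul_add ha (by omega), mul_zero, zero_add]
    · simp [G, ha0]
  have high : ∀ a < 2 ^ e,
      (if 0 < 2 ^ e + a then splitInd x (2 ^ e + a) (2 ^ e + 2 ^ e - (2 ^ e + a)) z else 0) =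
        (if a = 0 then splitInd X 1 1 Z else 0) + splitInd X 1 0 Z * G a := by
    intro a ha
    rw [if_pos (by positivity)]
    by_cases ha0 : a = 0
    · subst ha0
      rw [show 2 ^ e + 2 ^ e - (2 ^ e + 0) = 2 ^ e * 1 + 0 by omega,
        show 2 ^ e + 0 = 2 ^ e * 1 + 0 by ring,
        splitInd_two_pow_mul_add (by positivity) (by positivity)]
      have h00 : splitInd (x % 2 ^ e) 0 0 (z % 2 ^ e) = 1 := by simp [splitInd]
      simp [G, h00, X, Z]
    · simp only [G, if_pos (Nat.pos_of_ne_zero ha0), if_neg ha0, zero_add]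
      rw [show 2 ^ e + 2 ^ e - (2 ^ e + a) = 2 ^ e * 0 + (2 ^ e - a) by omega,
        show 2 ^ e + a = 2 ^ e * 1 + a by ring, splitInd_two_pow_mul_add ha (by omega)]
  have hU : ulamCount 1 X Z = splitInd X 0 1 Z + splitInd X 1 0 Z := by
    rw [ulamCount_one_eq_sum, sum_range_succ, sum_range_one]
  rw [powSplitCount, pow_succ, mul_two, sum_range_add,
    sum_congr rfl fun a ha ↦ low a (mem_range.1 ha),
    sum_congr rfl fun a ha ↦ high a (mem_range.1 ha),
    sum_add_distrib, sum_ite_eq' (range (2 ^ e)) 0, if_pos (by simp), ← mul_sum, ← mul_sum,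
    powSplitCount, hU]
  ring

lemma E1_eq_zero_iff (d x z : ℕ) : E1 d x z = 0 ↔ 2 ^ d - 1 ≤ x + z := by
  unfold E1
  split_ifs <;> simp_all

lemma E1_comm (d x z : ℕ) : E1 d x z = E1 d z x := by
  have : eIdx d x z = eIdx d z x := Nat.findGreatest_congr fun _ _ ↦ and_comm
  rw [E1, E1, this, add_comm x, add_comm (x % _)]

lemma E1_succ_of_lt {e x z : ℕ} (hx : x < 2 ^ e) (hz : z < 2 ^ e) :
    E1 (e + 1) x z = if 2 ^ e - 1 ≤ x + z then 1 else 2 := by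
  have hE : eIdx (e + 1) x z = e := by
    rw [eIdx, Nat.add_sub_cancel]
    exact Nat.findGreatest_eq ⟨by rwa [Nat.mod_eq_of_lt (by rw [pow_succ]; omega)],
      by rwa [Nat.mod_eq_of_lt (by rw [pow_succ]; omega)]⟩
  rw [E1, hE, Nat.mod_eq_of_lt hx, Nat.mod_eq_of_lt hz, pow_succ]
  split_ifs <;> omega

lemma E1_succ_two_pow_add {e x : ℕ} (hx : x < 2 ^ e) (z : ℕ) :
    E1 (e + 1) (2 ^ e + x) z = E1 e x z := by
  have hmod : ∀ k ≤ e, (2 ^ e + x) % 2 ^ k = x % 2 ^ k := fun k hk ↦ by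
    obtain ⟨c, hc⟩ := pow_dvd_pow 2 hk
    rw [hc, Nat.mul_add_mod]
  have hE : eIdx (e + 1) (2 ^ e + x) z = eIdx e x z := by
    rw [eIdx, eIdx, Nat.add_sub_cancel]
    cases e with
    | zero => rfl
    | succ n =>
      rw [Nat.findGreatest_of_not fun h ↦ by
        rw [Nat.mod_eq_of_lt (by rw [pow_succ]; omega)] at h; omega]
      exact Nat.findGreatest_congr fun k hk ↦ by rw [hmod (k + 1) (by omega)]
  have hle : eIdx e x z ≤ e := (Nat.findGreatest_le _).trans (Nat.sub_le e 1)
  have hlim : 2 ^ (e + 1) - 1 ≤ 2 ^ e + x + z ↔ 2 ^ e - 1 ≤ x + z := by rw [pow_succ]; omega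
  rw [E1, E1, hE, hmod _ hle]
  simp only [hlim]

lemma two_pow_add_div_mod {e x : ℕ} (hx : x < 2 ^ e) :
    (2 ^ e + x) / 2 ^ e = 1 ∧ (2 ^ e + x) % 2 ^ e = x := by
  constructor
  · exact Nat.div_eq_of_lt_le (by omega) (by omega)
  · rw [Nat.add_mod_left, Nat.mod_eq_of_lt hx]

theorem min_two_powSplitCount {e x z : ℕ} (hx : x < 2 ^ e) (hz : z < 2 ^ e) :
    min 2 (powSplitCount e x z) = E1 e x z := by
  induction e generalizing x z with
  | zero =>
    obtain ⟨rfl, rfl⟩ : x = 0 ∧ z = 0 := by simp_all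
    simp [powSplitCount, E1]
  | succ e ih =>
    rw [pow_succ] at hx hz
    rw [powSplitCount_succ]
    rcases lt_or_ge x (2 ^ e) with hx' | hx' <;> rcases lt_or_ge z (2 ^ e) with hz' | hz'
    · rw [Nat.div_eq_of_lt hx', Nat.div_eq_of_lt hz', Nat.mod_eq_of_lt hx', Nat.mod_eq_of_lt hz',
        E1_succ_of_lt hx' hz']
      have hU : ulamCount 1 0 0 = 2 := by simp [ulamCount_one]
      have hS : splitInd 0 1 1 0 = 1 := by simp [splitInd]
      have hE := E1_eq_zero_iff e x z
      rw [← ih hx' hz'] at hE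
      rw [hU, hS]
      split_ifs with h <;> [have := hE.2 h; have := mt hE.1 h] <;> omega
    · obtain ⟨z, rfl⟩ : ∃ z', z = 2 ^ e + z' := ⟨z - 2 ^ e, by omega⟩
      obtain ⟨hzd, hzm⟩ := two_pow_add_div_mod (show z < 2 ^ e by omega)
      rw [E1_comm, E1_succ_two_pow_add (show z < 2 ^ e by omega), E1_comm, ← ih hx' (by omega),
        Nat.div_eq_of_lt hx', Nat.mod_eq_of_lt hx', hzd, hzm]
      simp [ulamCount_one, splitInd]
    · obtain ⟨x, rfl⟩ : ∃ x', x = 2 ^ e + x' := ⟨x - 2 ^ e, by omega⟩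
      obtain ⟨hxd, hxm⟩ := two_pow_add_div_mod (show x < 2 ^ e by omega)
      rw [E1_succ_two_pow_add (show x < 2 ^ e by omega), ← ih (by omega) hz',
        Nat.div_eq_of_lt hz', Nat.mod_eq_of_lt hz', hxd, hxm]
      simp [ulamCount_one, splitInd]
    · have : E1 (e + 1) x z = 0 := (E1_eq_zero_iff _ _ _).2 (by rw [pow_succ]; omega)
      rw [this, Nat.div_eq_of_lt_le (k := 1) (by omega) (by omega),
        Nat.div_eq_of_lt_le (k := 1) (n := 2 ^ e) (m := z) (by omega) (by omega)]
      simp [ulamCount_one, splitInd]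

lemma O1_eq_E1_of_odd {d x z : ℕ} (hd : 1 ≤ d) (h : (x + z) % 2 = 1) : O1 d x z = E1 d x z := by
  have hlim : 2 ^ d - 2 ≤ x + z ↔ 2 ^ d - 1 ≤ x + z := by
    obtain ⟨e, rfl⟩ : ∃ e, d = e + 1 := ⟨d - 1, by omega⟩
    rw [pow_succ]
    omega
  rw [O1, E1, if_neg (by omega : ¬(x + z) % 2 = 0)]
  simp only [hlim]

theorem min_two_borrowCount {d x z : ℕ} (hd : 1 ≤ d) (hx : x < 2 ^ d) (hz : z < 2 ^ d) :
    min 2 (borrowCount d x z) = O1 d x z := by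
  obtain ⟨e, rfl⟩ : ∃ e, d = e + 1 := ⟨d - 1, by omega⟩
  rw [borrowCount_succ, ulamCount_one]
  rcases Nat.mod_two_eq_zero_or_one x with hx2 | hx2 <;>
    rcases Nat.mod_two_eq_zero_or_one z with hz2 | hz2
  · have hE := E1_eq_zero_iff e (x / 2) (z / 2)
    rw [← min_two_powSplitCount (by rw [pow_succ] at hx; omega) (by rw [pow_succ] at hz; omega)]
      at hE
    have hlim : 2 ^ e - 1 ≤ x / 2 + z / 2 ↔ 2 ^ (e + 1) - 2 ≤ x + z := by rw [pow_succ]; omega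
    rw [O1, if_pos (by omega : (x + z) % 2 = 0), if_neg (by omega : ¬x % 2 = 1), if_pos hx2,
      if_pos hz2]
    split_ifs with h <;> [have := hE.2 (hlim.2 h); have := mt hE.1 (mt hlim.1 h)] <;> omega
  · rw [if_pos hx2, if_neg (by omega), add_zero, one_mul, ← powSplitCount_succ_of_odd (.inr hz2),
      min_two_powSplitCount hx hz, O1_eq_E1_of_odd (by omega) (by omega)]
  · rw [if_neg (by omega), if_pos hz2, zero_add, one_mul, ← powSplitCount_succ_of_odd (.inl hx2),
      min_two_powSplitCount hx hz, O1_eq_E1_of_odd (by omega) (by omega)]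
  · rw [if_neg (by omega), if_neg (by omega), O1, if_pos (by omega : (x + z) % 2 = 0), if_pos hx2]
    simp

theorem culam_two_pow_mul_add_one_general (y : ℕ) (hy : 0 < y) (d : ℕ)
    (hd : 1 ≤ d) (x z : ℕ) :
    culam (2 ^ d * y + 1) x z =
      min 2 (culam (y - 1) (x / 2 ^ d) (z / 2 ^ d) * O1 d (x % 2 ^ d) (z % 2 ^ d) +
             culam y (x / 2 ^ d) (z / 2 ^ d) * O2 d (x % 2 ^ d) (z % 2 ^ d)) := by
  simp only [culam_eq_min_ulamCount]
  rw [ulamCount_two_pow_mul_add_one hd hy, min_two_add_mul, min_two_ulamCount_one d,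
    min_two_borrowCount hd (Nat.mod_lt _ (by positivity)) (Nat.mod_lt _ (by positivity))]
  ac_rfl

/-- tensor decomposition of `culam[2^d y + 1]` for odd `y`. -/
theorem culam_two_pow_mul_add_one (y : ℕ) (hy : 0 < y) (hodd : Odd y) (d : ℕ)
    (hd : 1 ≤ d) (x z : ℕ) :
    culam (2 ^ d * y + 1) x z =
      min 2 (culam (y - 1) (x / 2 ^ d) (z / 2 ^ d) * O1 d (x % 2 ^ d) (z % 2 ^ d) +
             culam y (x / 2 ^ d) (z / 2 ^ d) * O2 d (x % 2 ^ d) (z % 2 ^ d)) :=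
  culam_two_pow_mul_add_one_general y hy d hd x z
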